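/- Let (G₁,σ₁) and (G₂,σ₂) be balanced signed graphs with σ₁(e) = σ₂(e) for every edge e ∈ E(G₁) ∩ E(G₂), and let G = G₁ ∪ G₂ carry the signature σ with σ(e) = σ₁(e) for e ∈ E(G₁) and σ(e) = σ₂(e) for e ∈ E(G₂). Suppose G₁ ∩ G₂ is a complete graph K₂ on two vertices (a single edge with its endpoints). If c₁ and c₂ are signed tree-colorings of (G₁,σ₁) and (G₂,σ₂) respectively with c₁(v) = c₂(v) for every v ∈ V(G₁) ∩ V(G₂), then the common extension c of c₁ and c₂ is a signed tree-coloring of (G,σ). -/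

import Mathlib

/-- The color set `M n`: `{±1, …, ±k}` if `n = 2k`, and `{0, ±1, …, ±k}` if `n = 2k+1`. -/
def Mset (n : ℕ) : Set ℤ :=
  {j : ℤ | j.natAbs ≤ n / 2 ∧ (n % 2 = 0 → j ≠ 0)}

/-- `σ` is a signature of the graph `G`: every edge gets sign `1` or `-1`. -/
def IsSignature {V : Type*} (G : SimpleGraph V) (σ : Sym2 V → ℤ) : Prop :=
  ∀ e ∈ G.edgeSet, σ e = 1 ∨ σ e = -1

/-- The monochromatic subgraph `G^c(i, ±)`: its edges are the edges `uv` of `G` with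
`c u = σ(uv) * c v` (stated symmetrically) whose endpoints are colored `i` or `-i`. -/
def signedSubgraph {V : Type*} (G : SimpleGraph V) (σ : Sym2 V → ℤ)
    (c : V → ℤ) (i : ℤ) : SimpleGraph V where
  Adj u v := G.Adj u v ∧ (c u = σ s(u, v) * c v ∨ c v = σ s(u, v) * c u) ∧
    (c u = i ∨ c u = -i) ∧ (c v = i ∨ c v = -i)
  symm := ⟨by
    rintro u v ⟨h1, h2, h3, h4⟩
    exact ⟨h1.symm, by rw [Sym2.eq_swap]; exact h2.symm, h4, h3⟩⟩
  loopless := ⟨fun u ⟨h, _⟩ => h.ne rfl⟩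

/-- A signed tree-coloring: every monochromatic subgraph `G^c(c u, ±)` is a forest. -/
def IsSignedTreeColoring {V : Type*} (G : SimpleGraph V) (σ : Sym2 V → ℤ)
    (c : V → ℤ) : Prop :=
  ∀ u : V, (signedSubgraph G σ c (c u)).IsAcyclic

/-- A signed tree-`n`-coloring: a signed tree-coloring with colors in `M n`. -/
def IsSignedTreeNColoring {V : Type*} (G : SimpleGraph V) (σ : Sym2 V → ℤ)
    (n : ℕ) (c : V → ℤ) : Prop :=
  (∀ v, c v ∈ Mset n) ∧ IsSignedTreeColoring G σ c

/-- The signed vertex arboricity: the least `n` admitting a signed tree-`n`-coloring. -/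
noncomputable def signedVertexArboricity {V : Type*} (G : SimpleGraph V)
    (σ : Sym2 V → ℤ) : ℕ :=
  sInf {n : ℕ | ∃ c : V → ℤ, IsSignedTreeNColoring G σ n c}

/-- A signed graph is balanced if every cycle contains an even number of negative edges. -/
def IsBalanced {V : Type*} (G : SimpleGraph V) (σ : Sym2 V → ℤ) : Prop :=
  ∀ ⦃u : V⦄ (w : G.Walk u u), w.IsCycle →
    Even (List.countP (fun e => decide (σ e = -1)) w.edges)

/-- `G` has a `K₅` minor: five pairwise disjoint nonempty connected branch sets with
an edge of `G` between any two of them. -/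
def HasK5Minor {V : Type*} (G : SimpleGraph V) : Prop :=
  ∃ W : Fin 5 → Set V,
    (∀ i, (W i).Nonempty) ∧
    (Pairwise fun i j => Disjoint (W i) (W j)) ∧
    (∀ i, (G.induce (W i)).Connected) ∧
    (Pairwise fun i j => ∃ u ∈ W i, ∃ v ∈ W j, G.Adj u v)

/-- `G` is edge-maximal `K₅`-minor-free. -/
def EdgeMaximalK5MinorFree {V : Type*} (G : SimpleGraph V) : Prop :=
  ¬ HasK5Minor G ∧ ∀ u v : V, u ≠ v → ¬ G.Adj u v →
    HasK5Minor (G ⊔ SimpleGraph.fromEdgeSet {s(u, v)})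

/-- An (unsigned) tree-`k`-coloring: colors in `{1, …, k}`, each class inducing a forest. -/
def IsTreeColoring {V : Type*} (G : SimpleGraph V) (k : ℕ) (φ : V → ℕ) : Prop :=
  (∀ v, φ v ∈ Finset.Icc 1 k) ∧ ∀ i : ℕ, (G.induce (φ ⁻¹' {i})).IsAcyclic

/-- The (unsigned) vertex arboricity: the least `k` admitting a tree-`k`-coloring. -/
noncomputable def vertexArboricity {V : Type*} (G : SimpleGraph V) : ℕ :=
  sInf {k : ℕ | ∃ φ : V → ℕ, IsTreeColoring G k φ}

open SimpleGraph

section Helpers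
variable {V : Type*}

private lemma countP_reverse' (p : Sym2 V → Bool) (l : List (Sym2 V)) :
    l.reverse.countP p = l.countP p := by
  induction l with
  | nil => rfl
  | cons a l ih =>
    simp only [List.reverse_cons, List.countP_append, List.countP_cons, ih, List.countP_nil]
    omega

private lemma prod_sign (σg : Sym2 V → ℤ) :
    ∀ (l : List (Sym2 V)), (∀ e ∈ l, σg e = 1 ∨ σg e = -1) →
      (l.map σg).prod = (-1 : ℤ) ^ (l.countP fun e => decide (σg e = -1))
  | [], _ => by simp
  | e :: l, h => by
    have hl := prod_sign σg l (fun e' he' => h e' (List.mem_cons_of_mem _ he'))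
    rcases h e (List.mem_cons_self) with h1 | h1
    · simp [List.countP_cons, h1, hl]
    · simp [List.countP_cons, h1, hl, pow_succ, mul_comm]

private lemma ssg_le (G : SimpleGraph V) (σg : Sym2 V → ℤ) (c : V → ℤ) (i : ℤ) :
    signedSubgraph G σg c i ≤ G := by intro u v h; exact h.1

private lemma walk_prod {G : SimpleGraph V} {σg : Sym2 V → ℤ} (hs : IsSignature G σg)
    {c : V → ℤ} {i : ℤ} {u v : V} (p : (signedSubgraph G σg c i).Walk u v) :
    c u = (p.edges.map σg).prod * c v := by
  induction p with
  | nil => simp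
  | @cons u m v h p ih =>
    have he := hs s(u, m) ((SimpleGraph.mem_edgeSet G).mpr h.1)
    have h2 : c u = σg s(u, m) * c m := by
      rcases h.2.1 with h3 | h3
      · exact h3
      · rcases he with h4 | h4 <;> rw [h4] at h3 ⊢ <;> simp at h3 ⊢ <;> omega
    rw [Walk.edges_cons, List.map_cons, List.prod_cons, mul_assoc, ← ih]
    exact h2

private lemma walk_end_color {G : SimpleGraph V} {σg : Sym2 V → ℤ} {c : V → ℤ} {i : ℤ} :
    ∀ {u v : V} (p : (signedSubgraph G σg c i).Walk u v), 0 < p.length →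
      c v = i ∨ c v = -i := by
  intro u v p
  induction p with
  | nil => intro h; simp at h
  | cons h p ih =>
    intro _
    cases p with
    | nil => exact h.2.2.2
    | cons h' p' => exact ih (by simp)

private lemma balance_adj {G : SimpleGraph V} {σg : Sym2 V → ℤ} (hs : IsSignature G σg)
    (hb : IsBalanced G σg) {c : V → ℤ} {i : ℤ} {x y : V} (hadj : G.Adj x y)
    (p : (signedSubgraph G σg c i).Walk x y) (hp : p.IsPath) :
    (signedSubgraph G σg c i).Adj x y := by
  have hxy : x ≠ y := hadj.ne
  by_cases hmem : s(x, y) ∈ p.edges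
  · exact (SimpleGraph.mem_edgeSet _).mp (p.edges_subset_edgeSet hmem)
  · have hle : ∀ e ∈ p.edges, e ∈ G.edgeSet := fun e he =>
      SimpleGraph.edgeSet_mono (ssg_le G σg c i) (p.edges_subset_edgeSet he)
    have hlen : 0 < p.length := by
      rcases Nat.eq_zero_or_pos p.length with h0 | h0
      · exact absurd (p.eq_of_length_eq_zero h0) hxy
      · exact h0
    have hcy : c y = i ∨ c y = -i := walk_end_color p hlen
    have hcx : c x = i ∨ c x = -i := by
      have := walk_end_color p.reverse (by rwa [Walk.length_reverse])
      exact this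
    have hcyc : (Walk.cons hadj (p.transfer G hle).reverse).IsCycle := by
      rw [Walk.cons_isCycle_iff]
      refine ⟨(hp.transfer hle).reverse, ?_⟩
      rw [Walk.edges_reverse, List.mem_reverse, Walk.edges_transfer]
      exact hmem
    have heven := hb _ hcyc
    rw [Walk.edges_cons, List.countP_cons, Walk.edges_reverse, Walk.edges_transfer,
      countP_reverse'] at heven
    have hprod := walk_prod hs p
    rw [prod_sign σg p.edges (fun e he => hs e (hle e he))] at hprod
    have hsxy := hs s(x, y) ((SimpleGraph.mem_edgeSet G).mpr hadj)
    refine ⟨hadj, Or.inl ?_, hcx, hcy⟩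
    rcases hsxy with h1 | h1
    · rw [h1, one_mul]
      have : Even (p.edges.countP fun e => decide (σg e = -1)) := by
        simpa [h1] using heven
      rwa [this.neg_one_pow, one_mul] at hprod
    · rw [h1]
      have hodd : Odd (p.edges.countP fun e => decide (σg e = -1)) := by
        simp only [h1, decide_eq_true_eq] at heven
        simp at heven
        rcases Nat.even_or_odd (p.edges.countP fun e => decide (σg e = -1)) with he | ho
        · exfalso
          have := Nat.even_add_one.mp heven
          exact this he
        · exact ho
      rwa [hodd.neg_one_pow] at hprod

end Helpers

section Helpers2
open SimpleGraph
variable {V : Type*}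

private lemma signedSubgraph_neg (G : SimpleGraph V) (σg : Sym2 V → ℤ) (c : V → ℤ) (i : ℤ) :
    signedSubgraph G σg c (-i) = signedSubgraph G σg c i := by
  ext u v
  constructor <;> rintro ⟨h1, h2, h3, h4⟩ <;> exact ⟨h1, h2, by omega, by omega⟩

private lemma subAcyclic {G : SimpleGraph V} {σg : Sym2 V → ℤ} {c : V → ℤ}
    (h : IsSignedTreeColoring G σg c) (i : ℤ) :
    (signedSubgraph G σg c i).IsAcyclic := by
  intro v w hw
  cases w with
  | nil => exact hw.ne_nil rfl
  | cons ha p =>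
    have hacy := h v
    rcases ha.2.2.1 with h3 | h3
    · rw [h3] at hacy; exact hacy _ hw
    · rw [h3, signedSubgraph_neg] at hacy; exact hacy _ hw

private lemma sup_edge_acyclic {G : SimpleGraph V} {σg : Sym2 V → ℤ} {c : V → ℤ}
    (hs : IsSignature G σg) (hb : IsBalanced G σg) (h : IsSignedTreeColoring G σg c)
    (i : ℤ) {x y : V} (hadj : G.Adj x y) :
    ((signedSubgraph G σg c i) ⊔ SimpleGraph.fromEdgeSet {s(x, y)}).IsAcyclic := by
  classical
  set H₁ := signedSubgraph G σg c i with hH₁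
  have hsupedge : ∀ f ∈ (H₁ ⊔ SimpleGraph.fromEdgeSet {s(x, y)}).edgeSet,
      f ≠ s(x, y) → f ∈ H₁.edgeSet := by
    intro f hf hne
    rw [SimpleGraph.edgeSet_sup, SimpleGraph.edgeSet_fromEdgeSet] at hf
    rcases hf with hf | hf
    · exact hf
    · exact absurd (Set.mem_singleton_iff.mp hf.1) hne
  by_cases hA : H₁.Adj x y
  · have hle : SimpleGraph.fromEdgeSet {s(x, y)} ≤ H₁ := by
      intro u v huv
      rw [SimpleGraph.fromEdgeSet_adj] at huv
      rcases Sym2.eq_iff.mp (Set.mem_singleton_iff.mp huv.1) with ⟨rfl, rfl⟩ | ⟨rfl, rfl⟩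
      · exact hA
      · exact hA.symm
    rw [sup_eq_left.mpr hle]
    exact subAcyclic h i
  · intro v w hw
    by_cases he : s(x, y) ∈ w.edges
    · -- the edge is on a cycle, hence not a bridge, hence x-y reachable avoiding it
      have hnb : ¬ (H₁ ⊔ SimpleGraph.fromEdgeSet {s(x, y)}).IsBridge s(x, y) := fun hbr =>
        hbr.notMem_edges_of_isCycle hw he
      rw [SimpleGraph.isBridge_iff] at hnb
      push_neg at hnb
      have hadj' : (H₁ ⊔ SimpleGraph.fromEdgeSet {s(x, y)}).Adj x y :=
        (SimpleGraph.sup_adj _ _ _ _).mpr (Or.inr ((SimpleGraph.fromEdgeSet_adj _).mpr ⟨rfl, hadj.ne⟩))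
      obtain ⟨p, hpe⟩ :=
        SimpleGraph.reachable_delete_edges_iff_exists_walk.mp hnb
      -- make it a path
      have hpe' : s(x, y) ∉ p.bypass.edges := fun hmem => hpe (p.edges_bypass_subset hmem)
      have hedges : ∀ f ∈ p.bypass.edges, f ∈ H₁.edgeSet := fun f hf =>
        hsupedge f (p.bypass.edges_subset_edgeSet hf) (fun hfe => hpe' (hfe ▸ hf))
      have hpath := (p.bypass_isPath).transfer hedges
      exact absurd (balance_adj hs hb hadj _ hpath) hA
    · -- cycle avoids the edge, so lives in H₁
      have hedges : ∀ f ∈ w.edges, f ∈ H₁.edgeSet := fun f hf =>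
        hsupedge f (w.edges_subset_edgeSet hf) (fun hfe => he (hfe ▸ hf))
      exact subAcyclic h i _ (hw.transfer hedges)

end Helpers2

section Helpers3
open SimpleGraph
variable {V : Type*}

/-- Walks in the union graph can be pushed into `H₁` plus the gluing edge. -/
private lemma lemW {Γ H₁ : SimpleGraph V} {V₁ V₂ : Set V} {x y : V}
    (hcross : V₁ ∩ V₂ ⊆ {x, y}) (hxy : x ≠ y)
    (hΓ : ∀ ⦃u v⦄, Γ.Adj u v → H₁.Adj u v ∨ (u ∈ V₂ ∧ v ∈ V₂))
    (hH₁V : ∀ ⦃u v⦄, H₁.Adj u v → u ∈ V₁) :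
    ∀ {a b : V} (p : Γ.Walk a b), b ∈ V₁ →
      ∃ (a' : V) (q : (H₁ ⊔ SimpleGraph.fromEdgeSet {s(x, y)}).Walk a' b),
        (a ∈ V₁ → a' = a) ∧ (a ∉ V₁ → a' = x ∨ a' = y) ∧
        (∀ f ∈ q.edges, f ∈ p.edges ∨ f = s(x, y)) := by
  intro a b p
  induction p with
  | nil =>
    intro hb
    exact ⟨_, SimpleGraph.Walk.nil, fun _ => rfl, fun h => absurd hb h, by simp⟩
  | @cons a m b h p ih =>
    intro hb
    obtain ⟨m', q, hm', hm'', hq⟩ := ih hb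
    rcases hΓ h with hH | ⟨ha2, hm2⟩
    · have hmV₁ : m ∈ V₁ := hH₁V hH.symm
      have hmm : m' = m := hm' hmV₁
      subst hmm
      refine ⟨a, SimpleGraph.Walk.cons ((SimpleGraph.sup_adj _ _ _ _).mpr (Or.inl hH)) q,
        fun _ => rfl, fun hna => absurd (hH₁V hH) hna, ?_⟩
      intro f hf
      rw [SimpleGraph.Walk.edges_cons, List.mem_cons] at hf
      rcases hf with rfl | hf
      · exact Or.inl (by rw [SimpleGraph.Walk.edges_cons]; exact List.mem_cons_self)
      · exact (hq f hf).imp_left (fun h' =>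
          by rw [SimpleGraph.Walk.edges_cons]; exact List.mem_cons_of_mem _ h')
    · have hm'xy : m' = x ∨ m' = y := by
        by_cases hmV₁ : m ∈ V₁
        · have hmm : m' = m := hm' hmV₁
          subst hmm
          simpa using hcross ⟨hmV₁, hm2⟩
        · exact hm'' hmV₁
      by_cases haV₁ : a ∈ V₁
      · have haxy : a = x ∨ a = y := by simpa using hcross ⟨haV₁, ha2⟩
        by_cases ham : a = m'
        · refine ⟨a, q.copy ham.symm rfl, fun _ => rfl, fun hna => absurd haV₁ hna, ?_⟩
          intro f hf
          rw [SimpleGraph.Walk.edges_copy] at hf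
          exact (hq f hf).imp_left (fun h' =>
            by rw [SimpleGraph.Walk.edges_cons]; exact List.mem_cons_of_mem _ h')
        · have hsym : s(a, m') = s(x, y) := by
            rcases haxy with rfl | rfl <;> rcases hm'xy with rfl | rfl
            · exact absurd rfl ham
            · rfl
            · exact Sym2.eq_swap
            · exact absurd rfl ham
          have hadj' : (H₁ ⊔ SimpleGraph.fromEdgeSet {s(x, y)}).Adj a m' :=
            (SimpleGraph.sup_adj _ _ _ _).mpr
              (Or.inr ((SimpleGraph.fromEdgeSet_adj _).mpr ⟨hsym, ham⟩))
          refine ⟨a, SimpleGraph.Walk.cons hadj' q, fun _ => rfl,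
            fun hna => absurd haV₁ hna, ?_⟩
          intro f hf
          rw [SimpleGraph.Walk.edges_cons, List.mem_cons] at hf
          rcases hf with rfl | hf
          · exact Or.inr hsym
          · exact (hq f hf).imp_left (fun h' =>
              by rw [SimpleGraph.Walk.edges_cons]; exact List.mem_cons_of_mem _ h')
      · refine ⟨m', q, fun h' => absurd h' haV₁, fun _ => hm'xy, ?_⟩
        intro f hf
        exact (hq f hf).imp_left (fun h' =>
          by rw [SimpleGraph.Walk.edges_cons]; exact List.mem_cons_of_mem _ h')

/-- A path whose only possible crossing vertices are its endpoints is pure. -/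
private lemma lemM {Γ G₁ G₂ : SimpleGraph V} {V₁ V₂ : Set V}
    (hE : ∀ ⦃u v⦄, Γ.Adj u v → G₁.Adj u v ∨ G₂.Adj u v)
    (hV₁ : ∀ ⦃u v⦄, G₁.Adj u v → u ∈ V₁) (hV₂ : ∀ ⦃u v⦄, G₂.Adj u v → u ∈ V₂) :
    ∀ {a b : V} (p : Γ.Walk a b), p.IsPath →
      (∀ v ∈ p.support, v ∈ V₁ → v ∈ V₂ → v = a ∨ v = b) →
      (∀ f ∈ p.edges, f ∈ G₁.edgeSet) ∨ (∀ f ∈ p.edges, f ∈ G₂.edgeSet) := by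
  intro a b p
  induction p with
  | nil => intro _ _; left; simp
  | @cons a m b h p ih =>
    intro hp hcr
    have hp' : p.IsPath := hp.of_cons
    have hanotin : a ∉ p.support := by
      have hnd := hp.support_nodup
      rw [SimpleGraph.Walk.support_cons, List.nodup_cons] at hnd
      exact hnd.1
    have hcr' : ∀ v ∈ p.support, v ∈ V₁ → v ∈ V₂ → v = m ∨ v = b := by
      intro v hv h1 h2
      rcases hcr v (by rw [SimpleGraph.Walk.support_cons]; exact List.mem_cons_of_mem _ hv)
        h1 h2 with rfl | rfl
      · exact absurd hv hanotin
      · exact Or.inr rfl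
    have hmmem : m ∈ SimpleGraph.Walk.support (SimpleGraph.Walk.cons h p) := by
      rw [SimpleGraph.Walk.support_cons]
      exact List.mem_cons_of_mem _ p.start_mem_support
    rcases ih hp' hcr' with IH | IH
    · by_cases hg1 : G₁.Adj a m
      · left
        intro f hf
        rw [SimpleGraph.Walk.edges_cons, List.mem_cons] at hf
        rcases hf with rfl | hf
        · exact (SimpleGraph.mem_edgeSet _).mpr hg1
        · exact IH f hf
      · have hg2 : G₂.Adj a m := (hE h).resolve_left hg1
        cases p with
        | nil =>
          right
          intro f hf
          rw [SimpleGraph.Walk.edges_cons, List.mem_cons] at hf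
          rcases hf with rfl | hf
          · exact (SimpleGraph.mem_edgeSet _).mpr hg2
          · simp at hf
        | @cons _ m₂ _ h₂ p₂ =>
          exfalso
          have hme : G₁.Adj m m₂ := (SimpleGraph.mem_edgeSet _).mp
            (IH s(m, m₂) (by rw [SimpleGraph.Walk.edges_cons]; exact List.mem_cons_self))
          have hm1 : m ∈ V₁ := hV₁ hme
          have hm2 : m ∈ V₂ := hV₂ hg2.symm
          rcases hcr m hmmem hm1 hm2 with rfl | rfl
          · exact h.ne rfl
          · have hnd := hp'.support_nodup
            rw [SimpleGraph.Walk.support_cons, List.nodup_cons] at hnd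
            exact hnd.1 p₂.end_mem_support
    · by_cases hg2 : G₂.Adj a m
      · right
        intro f hf
        rw [SimpleGraph.Walk.edges_cons, List.mem_cons] at hf
        rcases hf with rfl | hf
        · exact (SimpleGraph.mem_edgeSet _).mpr hg2
        · exact IH f hf
      · have hg1 : G₁.Adj a m := (hE h).resolve_right hg2
        cases p with
        | nil =>
          left
          intro f hf
          rw [SimpleGraph.Walk.edges_cons, List.mem_cons] at hf
          rcases hf with rfl | hf
          · exact (SimpleGraph.mem_edgeSet _).mpr hg1
          · simp at hf
        | @cons _ m₂ _ h₂ p₂ =>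
          exfalso
          have hme : G₂.Adj m m₂ := (SimpleGraph.mem_edgeSet _).mp
            (IH s(m, m₂) (by rw [SimpleGraph.Walk.edges_cons]; exact List.mem_cons_self))
          have hm2 : m ∈ V₂ := hV₂ hme
          have hm1 : m ∈ V₁ := hV₁ hg1.symm
          rcases hcr m hmmem hm1 hm2 with rfl | rfl
          · exact h.ne rfl
          · have hnd := hp'.support_nodup
            rw [SimpleGraph.Walk.support_cons, List.nodup_cons] at hnd
            exact hnd.1 p₂.end_mem_support

end Helpers3

/-- gluing signed tree-colorings of two balanced signed graphs whose
intersection is a `K₂`. -/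
theorem stmt2 {V : Type*} [Fintype V]
    (G₁ G₂ : SimpleGraph V) (V₁ V₂ : Set V)
    (hV₁ : ∀ ⦃x y : V⦄, G₁.Adj x y → x ∈ V₁)
    (hV₂ : ∀ ⦃x y : V⦄, G₂.Adj x y → x ∈ V₂)
    (hcover : V₁ ∪ V₂ = Set.univ)
    (σ₁ σ₂ σ : Sym2 V → ℤ)
    (hs₁ : IsSignature G₁ σ₁) (hs₂ : IsSignature G₂ σ₂)
    (hagree : ∀ e ∈ G₁.edgeSet ∩ G₂.edgeSet, σ₁ e = σ₂ e)
    (hσ₁ : ∀ e ∈ G₁.edgeSet, σ e = σ₁ e) (hσ₂ : ∀ e ∈ G₂.edgeSet, σ e = σ₂ e)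
    (hb₁ : IsBalanced G₁ σ₁) (hb₂ : IsBalanced G₂ σ₂)
    (x y : V) (hxy : x ≠ y)
    (hK2verts : V₁ ∩ V₂ = {x, y})
    (hK2edge₁ : G₁.Adj x y) (hK2edge₂ : G₂.Adj x y)
    (hK2only : ∀ ⦃u v : V⦄, G₁.Adj u v → G₂.Adj u v → s(u, v) = s(x, y))
    (c₁ c₂ c : V → ℤ)
    (h₁ : IsSignedTreeColoring G₁ σ₁ c₁) (h₂ : IsSignedTreeColoring G₂ σ₂ c₂)
    (hcc : ∀ v ∈ V₁ ∩ V₂, c₁ v = c₂ v)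
    (hc₁ : ∀ v ∈ V₁, c v = c₁ v) (hc₂ : ∀ v ∈ V₂, c v = c₂ v) :
    IsSignedTreeColoring (G₁ ⊔ G₂) σ c := by
  classical
  intro u0
  set i := c u0 with hi
  set H := signedSubgraph (G₁ ⊔ G₂) σ c i with hHdef
  set H₁ := signedSubgraph G₁ σ₁ c₁ i with hHdef1
  set H₂ := signedSubgraph G₂ σ₂ c₂ i with hHdef2
  have F1 : ∀ ⦃u v : V⦄, H.Adj u v → G₁.Adj u v → H₁.Adj u v := by
    intro u v hHa hg
    have hu : u ∈ V₁ := hV₁ hg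
    have hv : v ∈ V₁ := hV₁ hg.symm
    obtain ⟨-, h2, h3, h4⟩ := hHa
    rw [hc₁ u hu, hc₁ v hv, hσ₁ _ ((SimpleGraph.mem_edgeSet _).mpr hg)] at h2
    rw [hc₁ u hu] at h3
    rw [hc₁ v hv] at h4
    exact ⟨hg, h2, h3, h4⟩
  have F2 : ∀ ⦃u v : V⦄, H.Adj u v → G₂.Adj u v → H₂.Adj u v := by
    intro u v hHa hg
    have hu : u ∈ V₂ := hV₂ hg
    have hv : v ∈ V₂ := hV₂ hg.symm
    obtain ⟨-, h2, h3, h4⟩ := hHa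
    rw [hc₂ u hu, hc₂ v hv, hσ₂ _ ((SimpleGraph.mem_edgeSet _).mpr hg)] at h2
    rw [hc₂ u hu] at h3
    rw [hc₂ v hv] at h4
    exact ⟨hg, h2, h3, h4⟩
  have A1 : H₁.IsAcyclic := subAcyclic h₁ i
  have A2 : H₂.IsAcyclic := subAcyclic h₂ i
  have A1' : (H₁ ⊔ SimpleGraph.fromEdgeSet {s(x, y)}).IsAcyclic :=
    sup_edge_acyclic hs₁ hb₁ h₁ i hK2edge₁
  have A2' : (H₂ ⊔ SimpleGraph.fromEdgeSet {s(x, y)}).IsAcyclic :=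
    sup_edge_acyclic hs₂ hb₂ h₂ i hK2edge₂
  rw [SimpleGraph.isAcyclic_iff_forall_adj_isBridge]
  intro a b hab
  rw [SimpleGraph.isBridge_iff]
  intro hr
  obtain ⟨p0, hp0e⟩ := SimpleGraph.reachable_delete_edges_iff_exists_walk.mp hr
  set p := p0.bypass with hpdef
  have hp : p.IsPath := p0.bypass_isPath
  have hpe : s(a, b) ∉ p.edges := fun hmem => hp0e (p0.edges_bypass_subset hmem)
  have hE' : ∀ ⦃u v : V⦄, H.Adj u v → G₁.Adj u v ∨ G₂.Adj u v := by
    intro u v huv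
    exact (SimpleGraph.sup_adj _ _ _ _).mp huv.1
  by_cases hsab : s(a, b) = s(x, y)
  · -- glue edge case: the path must be pure
    have habxy : (a = x ∧ b = y) ∨ (a = y ∧ b = x) := Sym2.eq_iff.mp hsab
    have hg1 : G₁.Adj a b := by
      rcases habxy with ⟨rfl, rfl⟩ | ⟨rfl, rfl⟩
      · exact hK2edge₁
      · exact hK2edge₁.symm
    have hg2 : G₂.Adj a b := by
      rcases habxy with ⟨rfl, rfl⟩ | ⟨rfl, rfl⟩
      · exact hK2edge₂
      · exact hK2edge₂.symm
    have hcr : ∀ v' ∈ p.support, v' ∈ V₁ → v' ∈ V₂ → v' = a ∨ v' = b := by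
      intro v' _ hm1 hm2
      have hm : v' ∈ V₁ ∩ V₂ := ⟨hm1, hm2⟩
      rw [hK2verts] at hm
      simp only [Set.mem_insert_iff, Set.mem_singleton_iff] at hm
      rcases habxy with ⟨rfl, rfl⟩ | ⟨rfl, rfl⟩
      · exact hm
      · exact hm.symm
    rcases lemM hE' hV₁ hV₂ p hp hcr with hpure | hpure
    · have hH₁ab : H₁.Adj a b := F1 hab hg1
      have memH₁ : ∀ f, f ∈ H.edgeSet → f ∈ G₁.edgeSet → f ∈ H₁.edgeSet := by
        intro f
        induction f using Sym2.ind with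
        | _ u v =>
          intro hfH hfG
          exact (SimpleGraph.mem_edgeSet _).mpr
            (F1 ((SimpleGraph.mem_edgeSet _).mp hfH) ((SimpleGraph.mem_edgeSet _).mp hfG))
      have hbr := SimpleGraph.isAcyclic_iff_forall_adj_isBridge.mp A1 hH₁ab
      rw [SimpleGraph.isBridge_iff] at hbr
      apply hbr
      apply SimpleGraph.reachable_delete_edges_iff_exists_walk.mpr
      refine ⟨p.transfer H₁
        (fun f hf => memH₁ f (p.edges_subset_edgeSet hf) (hpure f hf)), ?_⟩
      rw [SimpleGraph.Walk.edges_transfer]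
      exact hpe
    · have hH₂ab : H₂.Adj a b := F2 hab hg2
      have memH₂ : ∀ f, f ∈ H.edgeSet → f ∈ G₂.edgeSet → f ∈ H₂.edgeSet := by
        intro f
        induction f using Sym2.ind with
        | _ u v =>
          intro hfH hfG
          exact (SimpleGraph.mem_edgeSet _).mpr
            (F2 ((SimpleGraph.mem_edgeSet _).mp hfH) ((SimpleGraph.mem_edgeSet _).mp hfG))
      have hbr := SimpleGraph.isAcyclic_iff_forall_adj_isBridge.mp A2 hH₂ab
      rw [SimpleGraph.isBridge_iff] at hbr
      apply hbr
      apply SimpleGraph.reachable_delete_edges_iff_exists_walk.mpr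
      refine ⟨p.transfer H₂
        (fun f hf => memH₂ f (p.edges_subset_edgeSet hf) (hpure f hf)), ?_⟩
      rw [SimpleGraph.Walk.edges_transfer]
      exact hpe
  · -- generic edge: route the path through one side plus the glue edge
    have hcrs : V₁ ∩ V₂ ⊆ {x, y} := le_of_eq hK2verts
    have hcrs' : V₂ ∩ V₁ ⊆ {x, y} := by rw [Set.inter_comm]; exact hcrs
    rcases (SimpleGraph.sup_adj _ _ _ _).mp hab.1 with hg1 | hg2
    · have hH₁ab : H₁.Adj a b := F1 hab hg1
      have hΓ : ∀ ⦃u v : V⦄, H.Adj u v → H₁.Adj u v ∨ (u ∈ V₂ ∧ v ∈ V₂) := by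
        intro u v huv
        rcases hE' huv with hg | hg
        · exact Or.inl (F1 huv hg)
        · exact Or.inr ⟨hV₂ hg, hV₂ hg.symm⟩
      have hH₁V : ∀ ⦃u v : V⦄, H₁.Adj u v → u ∈ V₁ := fun u v h => hV₁ h.1
      obtain ⟨a', q, ha', -, hqe⟩ := lemW hcrs hxy hΓ hH₁V p (hV₁ hg1.symm)
      have haa : a' = a := ha' (hV₁ hg1)
      subst haa
      have hbr := SimpleGraph.isAcyclic_iff_forall_adj_isBridge.mp A1'
        ((SimpleGraph.sup_adj _ _ _ _).mpr (Or.inl hH₁ab))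
      rw [SimpleGraph.isBridge_iff] at hbr
      apply hbr
      apply SimpleGraph.reachable_delete_edges_iff_exists_walk.mpr
      refine ⟨q, ?_⟩
      intro hmem
      rcases hqe _ hmem with hf | hf
      · exact hpe hf
      · exact hsab hf
    · have hH₂ab : H₂.Adj a b := F2 hab hg2
      have hΓ : ∀ ⦃u v : V⦄, H.Adj u v → H₂.Adj u v ∨ (u ∈ V₁ ∧ v ∈ V₁) := by
        intro u v huv
        rcases hE' huv with hg | hg
        · exact Or.inr ⟨hV₁ hg, hV₁ hg.symm⟩
        · exact Or.inl (F2 huv hg)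
      have hH₂V : ∀ ⦃u v : V⦄, H₂.Adj u v → u ∈ V₂ := fun u v h => hV₂ h.1
      obtain ⟨a', q, ha', -, hqe⟩ := lemW hcrs' hxy hΓ hH₂V p (hV₂ hg2.symm)
      have haa : a' = a := ha' (hV₂ hg2)
      subst haa
      have hbr := SimpleGraph.isAcyclic_iff_forall_adj_isBridge.mp A2'
        ((SimpleGraph.sup_adj _ _ _ _).mpr (Or.inl hH₂ab))
      rw [SimpleGraph.isBridge_iff] at hbr
      apply hbr
      apply SimpleGraph.reachable_delete_edges_iff_exists_walk.mpr
      refine ⟨q, ?_⟩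
      intro hmem
      rcases hqe _ hmem with hf | hf
      · exact hpe hf
      · exact hsab hf
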